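/- The transpose of the right-spinor matrix representation of a ∈ Cl(n,n) equals the right-spinor representation of β(a*): F(a)ᵀ = F(β(a*)), where a* is the reversal anti-automorphism and β negates all ẽᵢ. Equivalently, F(a*) = β(F(a)ᵀ). -/
import Mathlib


open Matrix

/-- The quadratic form of signature `(n, n)` on `(Fin n → K) × (Fin n → K)`. -/
noncomputable def Qnn (K : Type*) [Field K] (n : ℕ) :
    QuadraticForm K ((Fin n → K) × (Fin n → K)) :=
  (QuadraticMap.weightedSumSquares K (fun _ : Fin n => (1 : K))).prod
    (QuadraticMap.weightedSumSquares K (fun _ : Fin n => (-1 : K)))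

/-- The generator `eₖ` of `Cl(n,n)` (squares to `1`). -/
noncomputable def eGen (K : Type*) [Field K] (n : ℕ) (k : Fin n) :
    CliffordAlgebra (Qnn K n) :=
  CliffordAlgebra.ι (Qnn K n) (Pi.single k 1, 0)

/-- The generator `ẽₖ` of `Cl(n,n)` (squares to `-1`). -/
noncomputable def fGen (K : Type*) [Field K] (n : ℕ) (k : Fin n) :
    CliffordAlgebra (Qnn K n) :=
  CliffordAlgebra.ι (Qnn K n) (0, Pi.single k 1)

theorem stmt18 {K : Type*} [Field K] (hK : (2 : K) ≠ 0)
    (incl : ∀ m : ℕ, CliffordAlgebra (Qnn K m) →ₐ[K] CliffordAlgebra (Qnn K (m + 1)))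
    (hincl : ∀ (m : ℕ) (v : (Fin m → K) × (Fin m → K)),
      incl m (CliffordAlgebra.ι (Qnn K m) v) =
        CliffordAlgebra.ι (Qnn K (m + 1)) (Fin.snoc v.1 0, Fin.snoc v.2 0))
    (F : ∀ m : ℕ, CliffordAlgebra (Qnn K m) →ₐ[K] Matrix (Fin (2 ^ m)) (Fin (2 ^ m)) K)
    (hF0 : ∀ x : K, F 0 (algebraMap K _ x) = algebraMap K _ x)
    (hrec : ∀ (m : ℕ) (A00 A01 A10 A11 : CliffordAlgebra (Qnn K m)),
      F (m + 1) (incl m A00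
          + eGen K (m + 1) (Fin.last m) * incl m A01
          + fGen K (m + 1) (Fin.last m) * incl m A10
          + fGen K (m + 1) (Fin.last m) * eGen K (m + 1) (Fin.last m) * incl m A11) =
        (Matrix.reindex (finSumFinEquiv.trans (finCongr (by rw [pow_succ, mul_two])))
            (finSumFinEquiv.trans (finCongr (by rw [pow_succ, mul_two]))))
          (Matrix.fromBlocks
            (F m (A00 + A11)) (F m (CliffordAlgebra.involute (A01 + A10)))
            (F m (A01 - A10)) (F m (CliffordAlgebra.involute (A00 - A11)))))
    (n : ℕ)
    (β : CliffordAlgebra (Qnn K n) →ₐ[K] CliffordAlgebra (Qnn K n))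
    (hβ : ∀ v : (Fin n → K) × (Fin n → K),
      β (CliffordAlgebra.ι (Qnn K n) v) = CliffordAlgebra.ι (Qnn K n) (v.1, -v.2))
    (a : CliffordAlgebra (Qnn K n)) :
    (F n a)ᵀ = F n (β (CliffordAlgebra.reverse a)) := by
  -- transpose of a scalar matrix
  have htr : ∀ (m : ℕ) (c : K),
      (algebraMap K (Matrix (Fin (2 ^ m)) (Fin (2 ^ m)) K) c)ᵀ
        = algebraMap K _ c := by
    intro m c
    rw [Matrix.algebraMap_eq_diagonal, Matrix.diagonal_transpose]
  have key : ∀ (m : ℕ) (v : (Fin m → K) × (Fin m → K)),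
      (F m (CliffordAlgebra.ι (Qnn K m) v))ᵀ
        = F m (CliffordAlgebra.ι (Qnn K m) (v.1, -v.2)) := by
    intro m
    induction m with
    | zero =>
      intro v
      have h1 : v = 0 := by
        ext i
        · exact i.elim0
        · exact i.elim0
      have h2 : ((v.1, -v.2) : (Fin 0 → K) × (Fin 0 → K)) = 0 := by
        ext i
        · exact i.elim0
        · exact i.elim0
      rw [h2, h1, map_zero, map_zero, Matrix.transpose_zero]
    | succ m ih =>
      intro v
      obtain ⟨x, y⟩ := v
      have decomp : ∀ (x y : Fin (m+1) → K),
          CliffordAlgebra.ι (Qnn K (m+1)) (x, y)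
            = incl m (CliffordAlgebra.ι (Qnn K m) (Fin.init x, Fin.init y))
              + eGen K (m+1) (Fin.last m)
                  * incl m (algebraMap K _ (x (Fin.last m)))
              + fGen K (m+1) (Fin.last m)
                  * incl m (algebraMap K _ (y (Fin.last m)))
              + fGen K (m+1) (Fin.last m) * eGen K (m+1) (Fin.last m)
                  * incl m (algebraMap K _ (0 : K)) := by
        intro x y
        rw [map_zero, map_zero, mul_zero, add_zero, hincl]
        rw [AlgHom.commutes, AlgHom.commutes]
        rw [Algebra.algebraMap_eq_smul_one, Algebra.algebraMap_eq_smul_one,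
          mul_smul_comm, mul_smul_comm, mul_one, mul_one]
        unfold eGen fGen
        rw [← _root_.map_smul, ← _root_.map_smul, ← map_add, ← map_add]
        congr 1
        ext i
        · simp only [Prod.fst_add, Prod.smul_fst, Prod.snd_add, Prod.smul_snd,
            smul_zero, add_zero, Pi.add_apply, Pi.smul_apply, smul_eq_mul]
          refine Fin.lastCases ?_ (fun j => ?_) i
          · simp [Fin.snoc_last]
          · simp [Fin.snoc_castSucc, Fin.init, Pi.single_eq_of_ne (Fin.castSucc_lt_last j).ne]
        · simp only [Prod.fst_add, Prod.smul_fst, Prod.snd_add, Prod.smul_snd,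
            smul_zero, add_zero, zero_add, Pi.add_apply, Pi.smul_apply, smul_eq_mul]
          refine Fin.lastCases ?_ (fun j => ?_) i
          · simp [Fin.snoc_last]
          · simp [Fin.snoc_castSucc, Fin.init, Pi.single_eq_of_ne (Fin.castSucc_lt_last j).ne]
      rw [decomp x y, decomp x (-y), hrec, hrec]
      rw [Matrix.transpose_reindex, Matrix.fromBlocks_transpose]
      have hinvs : ∀ c : K, CliffordAlgebra.involute (algebraMap K (CliffordAlgebra (Qnn K m)) c)
          = algebraMap K _ c := fun c => AlgHom.commutes _ c
      have hinit : Fin.init (-y) = - Fin.init y := by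
        funext j; simp [Fin.init]
      have hlast : (-y) (Fin.last m) = - (y (Fin.last m)) := rfl
      simp only [map_zero, add_zero, sub_zero, hinit, hlast]
      have e1 : ((F m) (CliffordAlgebra.ι (Qnn K m) (Fin.init x, Fin.init y)))ᵀ
          = (F m) (CliffordAlgebra.ι (Qnn K m) (Fin.init x, -Fin.init y)) :=
        ih (Fin.init x, Fin.init y)
      have e2 : ((F m) (algebraMap K (CliffordAlgebra (Qnn K m)) (x (Fin.last m))
            - algebraMap K (CliffordAlgebra (Qnn K m)) (y (Fin.last m))))ᵀ
          = (F m) (CliffordAlgebra.involute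
              (algebraMap K (CliffordAlgebra (Qnn K m)) (x (Fin.last m))
                + algebraMap K (CliffordAlgebra (Qnn K m)) (-y (Fin.last m)))) := by
        rw [← map_sub, ← map_add, hinvs, AlgHom.commutes, AlgHom.commutes, htr]
        congr 1
        ring
      have e3 : ((F m) (CliffordAlgebra.involute
            (algebraMap K (CliffordAlgebra (Qnn K m)) (x (Fin.last m))
              + algebraMap K (CliffordAlgebra (Qnn K m)) (y (Fin.last m)))))ᵀ
          = (F m) (algebraMap K (CliffordAlgebra (Qnn K m)) (x (Fin.last m))
              - algebraMap K (CliffordAlgebra (Qnn K m)) (-y (Fin.last m))) := by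
        rw [← map_add, ← map_sub, hinvs, AlgHom.commutes, AlgHom.commutes, htr]
        congr 1
        ring
      have e4 : ((F m) (CliffordAlgebra.involute
            (CliffordAlgebra.ι (Qnn K m) (Fin.init x, Fin.init y))))ᵀ
          = (F m) (CliffordAlgebra.involute
              (CliffordAlgebra.ι (Qnn K m) (Fin.init x, -Fin.init y))) := by
        rw [CliffordAlgebra.involute_ι, CliffordAlgebra.involute_ι, map_neg,
          Matrix.transpose_neg, e1, map_neg]
      rw [e1, e2, e3, e4]
  induction a using CliffordAlgebra.induction with
  | algebraMap r =>
    rw [AlgHom.commutes, htr, CliffordAlgebra.reverse.commutes, AlgHom.commutes,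
      AlgHom.commutes]
  | ι v =>
    rw [CliffordAlgebra.reverse_ι, hβ, key]
  | mul a b ha hb =>
    rw [_root_.map_mul, Matrix.transpose_mul, ha, hb, CliffordAlgebra.reverse.map_mul,
      _root_.map_mul, _root_.map_mul]
  | add a b ha hb =>
    rw [map_add, Matrix.transpose_add, ha, hb, map_add, map_add, map_add]
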